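/- (ODE Lemma, case μ < 1/4.) Let μ < 1/4, p > 1, s ≥ β₋(p − 1) + 2, ε ∈ (0, min{1, √(1 − 4μ)}), H̄ ∈ ℝ, and set η(r) := r^{β₋}(1 + r^ε) for r > 0. Then there exists ρ̄ > 0 such that for every ρ ∈ (0, ρ̄) there is no function v ∈ C²((0, ρ]) with v > 0 on (0, ρ), v' < 0 on (0, ρ), v(ρ) = 0 and v'(ρ) < 0, satisfying −v''(r) − (2η'(r)/η(r) − H̄)·v'(r) + (η(r)^{p−1}/r^s)·v(r)^p = 0 for all r ∈ (0, ρ). (Equivalently: any decreasing positive solution starting from v(ρ) = 0, v'(ρ) = −κ < 0 blows up at some R_κ > 0 and cannot be continued down to r = 0.) -/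

import Mathlib

/-
With `w = -v'`, the bounds `|2η'/η - H̄| ≤ K / r` and `η^(p-1) / r^s ≥ r⁻²` (the latter from
`s ≥ β₋(p-1) + 2` and `r ≤ 1`) turn the equation into `w' ≤ K w / r - v^p / r²`. This inequality
is invariant under `r ↦ R r`, so it suffices to study it on `[1/2, 1]`, where the integrating
factor `e^(2K(1-r))` reduces it to `w' ≲ -v^p`. Two consequences:
* `v(1/2) ≥ v(1) + c v(1)^p`; iterated over the scales `ρ 2⁻ⁿ`, `v` is unbounded near `0`;
* an energy estimate for `w² / 2` against `v^(p+1) / (p+1)` gives `w ≳ v^((p+1)/2)` on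
  `[1/2, 3/4]` as soon as `v(1) ≥ 1`, so `v^(-(p-1)/2)` increases there by a fixed amount,
  which it cannot do when `v(1)` is large. Hence `v(1)`, and after rescaling `v(R)` for every
  `R ∈ (0, ρ)`, is bounded by a constant depending only on `K` and `p`.
-/

open Set Metric MeasureTheory Real

noncomputable section

/-- Distance to the boundary of `Ω`. -/
def bdist {N : ℕ} (Ω : Set (EuclideanSpace ℝ (Fin N))) (x : EuclideanSpace ℝ (Fin N)) : ℝ :=
  Metric.infDist x Ωᶜ

/-- The collar `Ω_ρ = {x ∈ Ω : δ(x) < ρ}`. -/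
def collar {N : ℕ} (Ω : Set (EuclideanSpace ℝ (Fin N))) (ρ : ℝ) :
    Set (EuclideanSpace ℝ (Fin N)) :=
  {x ∈ Ω | bdist Ω x < ρ}

/-- The ring `Ω_{ε,ρ} = {x ∈ Ω : ε < δ(x) < ρ}`. -/
def ring' {N : ℕ} (Ω : Set (EuclideanSpace ℝ (Fin N))) (ε ρ : ℝ) :
    Set (EuclideanSpace ℝ (Fin N)) :=
  {x ∈ Ω | ε < bdist Ω x ∧ bdist Ω x < ρ}

/-- The Laplacian. -/
def lap {N : ℕ} (f : EuclideanSpace ℝ (Fin N) → ℝ) (x : EuclideanSpace ℝ (Fin N)) : ℝ :=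
  ∑ i : Fin N, fderiv ℝ (fun y => fderiv ℝ f y (EuclideanSpace.single i 1)) x
    (EuclideanSpace.single i 1)

/-- `ρ₀` is a good collar width: `δ` is `C²` on `Ω_{ρ₀}`, `|∇δ| = 1` there, `Δδ` bounded. -/
def GoodCollar {N : ℕ} (Ω : Set (EuclideanSpace ℝ (Fin N))) (ρ₀ : ℝ) : Prop :=
  0 < ρ₀ ∧ ContDiffOn ℝ 2 (bdist Ω) (collar Ω ρ₀) ∧
    (∀ x ∈ collar Ω ρ₀, ‖gradient (bdist Ω) x‖ = 1) ∧
    ∃ M, ∀ x ∈ collar Ω ρ₀, |lap (bdist Ω) x| ≤ M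

/-- A super-harmonic of `L_μ = -Δ - μ/δ²` on `G`. -/
def SuperHarm {N : ℕ} (Ω : Set (EuclideanSpace ℝ (Fin N))) (μ : ℝ)
    (G : Set (EuclideanSpace ℝ (Fin N))) (h : EuclideanSpace ℝ (Fin N) → ℝ) : Prop :=
  ContDiffOn ℝ 2 h G ∧ ∀ x ∈ G, 0 ≤ -(lap h x) - μ / (bdist Ω x) ^ 2 * h x

/-- A sub-harmonic of `L_μ = -Δ - μ/δ²` on `G`. -/
def SubHarm {N : ℕ} (Ω : Set (EuclideanSpace ℝ (Fin N))) (μ : ℝ)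
    (G : Set (EuclideanSpace ℝ (Fin N))) (h : EuclideanSpace ℝ (Fin N) → ℝ) : Prop :=
  ContDiffOn ℝ 2 h G ∧ ∀ x ∈ G, -(lap h x) - μ / (bdist Ω x) ^ 2 * h x ≤ 0

/-- A positive local super-harmonic of `L_μ`, defined on the collar `Ω_σ`. -/
def PosSuperHarmOn {N : ℕ} (Ω : Set (EuclideanSpace ℝ (Fin N))) (μ σ : ℝ)
    (h : EuclideanSpace ℝ (Fin N) → ℝ) : Prop :=
  SuperHarm Ω μ (collar Ω σ) h ∧ ∀ x ∈ collar Ω σ, 0 < h x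

/-- A sub-solution of `(*)`: `-Δu - (μ/δ²)u + u^p/δ^s = 0` on `G`. -/
def SubSol {N : ℕ} (Ω : Set (EuclideanSpace ℝ (Fin N))) (μ s p : ℝ)
    (G : Set (EuclideanSpace ℝ (Fin N))) (u : EuclideanSpace ℝ (Fin N) → ℝ) : Prop :=
  ContDiffOn ℝ 2 u G ∧ (∀ x ∈ G, 0 ≤ u x) ∧
    ∀ x ∈ G, -(lap u x) - μ / (bdist Ω x) ^ 2 * u x + (u x) ^ p / (bdist Ω x) ^ s ≤ 0

/-- A super-solution of `(*)` on `G`. -/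
def SuperSol {N : ℕ} (Ω : Set (EuclideanSpace ℝ (Fin N))) (μ s p : ℝ)
    (G : Set (EuclideanSpace ℝ (Fin N))) (u : EuclideanSpace ℝ (Fin N) → ℝ) : Prop :=
  ContDiffOn ℝ 2 u G ∧ (∀ x ∈ G, 0 < u x) ∧
    ∀ x ∈ G, 0 ≤ -(lap u x) - μ / (bdist Ω x) ^ 2 * u x + (u x) ^ p / (bdist Ω x) ^ s

/-- A regularized distance `(d, c)` on `Ω`. -/
def RegDist {N : ℕ} (Ω : Set (EuclideanSpace ℝ (Fin N))) (d : EuclideanSpace ℝ (Fin N) → ℝ)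
    (c : ℝ) : Prop :=
  1 ≤ c ∧ ContDiffOn ℝ 2 d Ω ∧ (∀ x ∈ Ω, 0 < d x) ∧
    (∀ x ∈ Ω, c⁻¹ * bdist Ω x ≤ d x ∧ d x ≤ c * bdist Ω x) ∧
    (∀ x ∈ Ω, ‖gradient d x‖ ≤ c) ∧ (∀ x ∈ Ω, |lap d x| ≤ c / d x)

theorem sub_le_sub_of_hasDerivAt_le {f g f' g' : ℝ → ℝ} {a b : ℝ} (hab : a ≤ b)
    (hf : ∀ t ∈ Icc a b, HasDerivAt f (f' t) t) (hg : ∀ t ∈ Icc a b, HasDerivAt g (g' t) t)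
    (hle : ∀ t ∈ Icc a b, f' t ≤ g' t) : f b - f a ≤ g b - g a := by
  have hmono : MonotoneOn (fun t => g t - f t) (Icc a b) :=
    monotoneOn_of_hasDerivWithinAt_nonneg (convex_Icc a b)
      (fun t ht => ((hg t ht).sub (hf t ht)).continuousAt.continuousWithinAt)
      (fun t ht =>
        ((hg t (interior_subset ht)).sub (hf t (interior_subset ht))).hasDerivWithinAt)
      (fun t ht => sub_nonneg.2 (hle t (interior_subset ht)))
  linarith [hmono (left_mem_Icc.2 hab) (right_mem_Icc.2 hab) hab]

theorem mul_sub_le_sub_of_le_hasDerivAt {f f' : ℝ → ℝ} {a b C : ℝ} (hab : a ≤ b)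
    (hf : ∀ t ∈ Icc a b, HasDerivAt f (f' t) t) (hle : ∀ t ∈ Icc a b, C ≤ f' t) :
    C * (b - a) ≤ f b - f a := by
  have := sub_le_sub_of_hasDerivAt_le hab (fun t _ => hasDerivAt_mul_const C) hf hle
  linarith

theorem sub_le_mul_sub_of_hasDerivAt_le {f f' : ℝ → ℝ} {a b C : ℝ} (hab : a ≤ b)
    (hf : ∀ t ∈ Icc a b, HasDerivAt f (f' t) t) (hle : ∀ t ∈ Icc a b, f' t ≤ C) :
    f b - f a ≤ C * (b - a) := by
  have := sub_le_sub_of_hasDerivAt_le hab hf (fun t _ => hasDerivAt_mul_const C) hle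
  linarith

theorem mul_sub_le_rpow_neg_sub_rpow_neg {v w : ℝ → ℝ} {a b c m : ℝ} (hab : a ≤ b)
    (hm : 0 ≤ m) (hv : ∀ t ∈ Icc a b, 0 < v t) (hvd : ∀ t ∈ Icc a b, HasDerivAt v (-w t) t)
    (hw : ∀ t ∈ Icc a b, c * v t ^ (m + 1) ≤ w t) :
    m * c * (b - a) ≤ v b ^ (-m) - v a ^ (-m) := by
  refine mul_sub_le_sub_of_le_hasDerivAt hab
    (fun t ht => (hvd t ht).rpow_const (Or.inl (hv t ht).ne')) fun t ht => ?_
  have hvt := hv t ht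
  have hcancel : v t ^ (m + 1) * v t ^ (-m - 1) = 1 := by
    rw [← rpow_add hvt, show m + 1 + (-m - 1) = 0 by ring, rpow_zero]
  calc m * c = m * (c * v t ^ (m + 1)) * v t ^ (-m - 1) := by
        rw [mul_assoc, mul_assoc, hcancel, mul_one]
    _ ≤ m * w t * v t ^ (-m - 1) := by gcongr; exact hw t ht
    _ = -w t * -m * v t ^ (-m - 1) := by ring

theorem rpow_neg_le_of_inv_rpow_inv_le {x τ m : ℝ} (hτ : 0 < τ) (hm : 0 < m)
    (hx : τ⁻¹ ^ m⁻¹ ≤ x) : x ^ (-m) ≤ τ := by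
  have := rpow_le_rpow (by positivity) hx hm.le
  rw [rpow_inv_rpow (by positivity) hm.ne'] at this
  rw [rpow_neg ((by positivity : 0 ≤ τ⁻¹ ^ m⁻¹).trans hx), ← inv_inv τ]
  exact inv_anti₀ (by positivity) this

-- The integrating factor for `w' ≤ K w / t - …` on `[1/2, 1]`, where `K / t ≤ 2 K`.
def weighted (K : ℝ) (w : ℝ → ℝ) (t : ℝ) : ℝ := exp (2 * K * (1 - t)) * w t

theorem hasDerivAt_weighted {K d t : ℝ} {w : ℝ → ℝ} (hw : HasDerivAt w d t) :
    HasDerivAt (weighted K w) (exp (2 * K * (1 - t)) * (d - 2 * K * w t)) t :=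
  ((((hasDerivAt_id t).const_sub 1).const_mul (2 * K)).exp.mul hw).congr_deriv (by simp; ring)

theorem le_weighted {K t : ℝ} {w : ℝ → ℝ} (hK : 0 ≤ K) (ht : t ≤ 1) (hw : 0 ≤ w t) :
    w t ≤ weighted K w t :=
  le_mul_of_one_le_left hw (one_le_exp (by nlinarith))

theorem exp_neg_mul_weighted_le {K t : ℝ} {w : ℝ → ℝ} (hK : 0 ≤ K) (ht : 1 / 2 ≤ t)
    (hw : 0 ≤ w t) : exp (-K) * weighted K w t ≤ w t := by
  rw [weighted, ← mul_assoc, ← exp_add]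
  exact mul_le_of_le_one_left hw (exp_le_one_iff.2 (by nlinarith))

structure BlowupIneqOn (K p : ℝ) (s : Set ℝ) (v w w' : ℝ → ℝ) : Prop where
  pos : ∀ t ∈ s, 0 < v t
  pos_w : ∀ t ∈ s, 0 < w t
  hasDerivAt : ∀ t ∈ s, HasDerivAt v (-w t) t
  hasDerivAt_w : ∀ t ∈ s, HasDerivAt w (w' t) t
  deriv_w_le : ∀ t ∈ s, w' t ≤ K / t * w t - v t ^ p / t ^ 2

namespace BlowupIneqOn

variable {K p : ℝ} {s : Set ℝ} {v w w' : ℝ → ℝ}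

theorem mono (h : BlowupIneqOn K p s v w w') {t : Set ℝ} (hts : t ⊆ s) :
    BlowupIneqOn K p t v w w' where
  pos x hx := h.pos x (hts hx)
  pos_w x hx := h.pos_w x (hts hx)
  hasDerivAt x hx := h.hasDerivAt x (hts hx)
  hasDerivAt_w x hx := h.hasDerivAt_w x (hts hx)
  deriv_w_le x hx := h.deriv_w_le x (hts hx)

theorem rescale (h : BlowupIneqOn K p s v w w') {R : ℝ} (hR : 0 < R) :
    BlowupIneqOn K p ((R * ·) ⁻¹' s) (fun x => v (R * x)) (fun x => R * w (R * x))
      (fun x => R ^ 2 * w' (R * x)) where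
  pos x hx := h.pos _ hx
  pos_w x hx := mul_pos hR (h.pos_w _ hx)
  hasDerivAt x hx :=
    ((h.hasDerivAt _ hx).comp x ((hasDerivAt_id x).const_mul R)).congr_deriv (by ring)
  hasDerivAt_w x hx :=
    (((h.hasDerivAt_w _ hx).comp x ((hasDerivAt_id x).const_mul R)).const_mul R).congr_deriv
      (by ring)
  deriv_w_le x hx := by
    calc R ^ 2 * w' (R * x)
        ≤ R ^ 2 * (K / (R * x) * w (R * x) - v (R * x) ^ p / (R * x) ^ 2) := by
          gcongr; exact h.deriv_w_le _ hx
      _ = K / x * (R * w (R * x)) - v (R * x) ^ p / x ^ 2 := by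
          rcases eq_or_ne x 0 with rfl | hx0
          · simp
          · field_simp

theorem antitoneOn (h : BlowupIneqOn K p s v w w') (hs : Convex ℝ s) : AntitoneOn v s :=
  antitoneOn_of_hasDerivWithinAt_nonpos hs
    (fun t ht => (h.hasDerivAt t ht).continuousAt.continuousWithinAt)
    (fun t ht => (h.hasDerivAt t (interior_subset ht)).hasDerivWithinAt)
    (fun t ht => by linarith [h.pos_w t (interior_subset ht)])

theorem deriv_weighted_le (h : BlowupIneqOn K p (Icc (1 / 2) 1) v w w') (hK : 0 ≤ K) {t : ℝ}
    (ht : t ∈ Icc (1 / 2 : ℝ) 1) :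
    exp (2 * K * (1 - t)) * (w' t - 2 * K * w t) ≤ -v t ^ p := by
  have ht0 : 0 < t := by linarith [ht.1]
  have hvp : 0 < v t ^ p := rpow_pos_of_pos (h.pos t ht) p
  have hdrift : K / t * w t ≤ 2 * K * w t := by
    gcongr
    · exact (h.pos_w t ht).le
    · rw [div_le_iff₀ ht0]; nlinarith [ht.1]
  have hpot : v t ^ p ≤ v t ^ p / t ^ 2 :=
    le_div_self hvp.le (by positivity) (by nlinarith [ht.2])
  have hX : w' t - 2 * K * w t ≤ -v t ^ p := by linarith [h.deriv_w_le t ht]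
  calc exp (2 * K * (1 - t)) * (w' t - 2 * K * w t) ≤ 1 * (w' t - 2 * K * w t) :=
        mul_le_mul_of_nonpos_right (one_le_exp (by nlinarith [ht.2])) (by linarith)
    _ ≤ -v t ^ p := by linarith

theorem linear_le_w (h : BlowupIneqOn K p (Icc (1 / 2) 1) v w w') (hK : 0 ≤ K)
    (hp : 0 ≤ p) {r : ℝ} (hr : r ∈ Icc (1 / 2 : ℝ) 1) :
    exp (-K) * (v 1 ^ p * (1 - r)) ≤ w r := by
  have hsub : Icc r 1 ⊆ Icc (1 / 2 : ℝ) 1 := Icc_subset_Icc_left hr.1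
  have h1 : (1 : ℝ) ∈ Icc (1 / 2 : ℝ) 1 := ⟨by norm_num, le_rfl⟩
  have hdrop : weighted K w 1 - weighted K w r ≤ -v 1 ^ p * (1 - r) := by
    refine sub_le_mul_sub_of_hasDerivAt_le hr.2
      (fun t ht => hasDerivAt_weighted (h.hasDerivAt_w t (hsub ht))) fun t ht => ?_
    have hvt : v 1 ≤ v t := h.antitoneOn (convex_Icc _ _) (hsub ht) h1 ht.2
    have := rpow_le_rpow (h.pos 1 h1).le hvt hp
    linarith [h.deriv_weighted_le hK (hsub ht)]
  have hw1 : weighted K w 1 = w 1 := by simp [weighted]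
  have hw1_pos := h.pos_w 1 h1
  calc exp (-K) * (v 1 ^ p * (1 - r)) ≤ exp (-K) * weighted K w r := by gcongr; linarith
    _ ≤ w r := exp_neg_mul_weighted_le hK hr.1 (h.pos_w r hr).le

theorem add_rpow_le (h : BlowupIneqOn K p (Icc (1 / 2) 1) v w w') (hK : 0 ≤ K) (hp : 0 ≤ p)
    {a b : ℝ} (ha : 1 / 2 ≤ a) (hab : a ≤ b) (hb : b ≤ 1) :
    v 1 + exp (-K) * ((1 - b) * (b - a)) * v 1 ^ p ≤ v a := by
  have hsub : Icc a b ⊆ Icc (1 / 2 : ℝ) 1 := Icc_subset_Icc ha hb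
  have hdrop : v b - v a ≤ -(exp (-K) * (v 1 ^ p * (1 - b))) * (b - a) := by
    refine sub_le_mul_sub_of_hasDerivAt_le hab (fun t ht => h.hasDerivAt t (hsub ht))
      fun t ht => ?_
    have hw := h.linear_le_w hK hp (hsub ht)
    have : exp (-K) * (v 1 ^ p * (1 - b)) ≤ exp (-K) * (v 1 ^ p * (1 - t)) := by
      have := rpow_nonneg (h.pos 1 ⟨by norm_num, le_rfl⟩).le p
      gcongr; exact ht.2
    linarith
  have hvb : v 1 ≤ v b :=
    h.antitoneOn (convex_Icc _ _) ⟨by linarith, hb⟩ ⟨by norm_num, le_rfl⟩ hb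
  linarith

theorem energy (h : BlowupIneqOn K p (Icc (1 / 2) 1) v w w') (hK : 0 ≤ K) (hp : 0 ≤ p) {r : ℝ}
    (hr : r ∈ Icc (1 / 2 : ℝ) 1) :
    v r ^ (p + 1) ≤ v 1 ^ (p + 1) + (p + 1) / 2 * weighted K w r ^ 2 := by
  have hsub : Icc r 1 ⊆ Icc (1 / 2 : ℝ) 1 := Icc_subset_Icc_left hr.1
  have key := sub_le_sub_of_hasDerivAt_le hr.2
    (f := fun t => (p + 1) / 2 * weighted K w t ^ 2) (g := fun t => v t ^ (p + 1))
    (fun t ht => ((hasDerivAt_weighted (h.hasDerivAt_w t (hsub ht))).pow 2).const_mul _)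
    (fun t ht => (h.hasDerivAt t (hsub ht)).rpow_const (Or.inl (h.pos t (hsub ht)).ne'))
    fun t ht => by
      have ht' := hsub ht
      have hw := (h.pos_w t ht').le
      have hq : w t ≤ weighted K w t := le_weighted hK ht'.2 hw
      have hqq' : weighted K w t * (exp (2 * K * (1 - t)) * (w' t - 2 * K * w t))
          ≤ -w t * v t ^ p := by
        nlinarith [mul_le_mul_of_nonneg_left (h.deriv_weighted_le hK ht') (hw.trans hq),
          rpow_nonneg (h.pos t ht').le p]
      rw [add_sub_cancel_right]
      calc _ = (p + 1) * (weighted K w t * (exp (2 * K * (1 - t)) * (w' t - 2 * K * w t))) := by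
            norm_num; ring
        _ ≤ (p + 1) * (-w t * v t ^ p) := mul_le_mul_of_nonneg_left hqq' (by linarith)
        _ = _ := by ring
  have : 0 ≤ (p + 1) / 2 * weighted K w 1 ^ 2 := mul_nonneg (by linarith) (sq_nonneg _)
  linarith

theorem rpow_le_w (h : BlowupIneqOn K p (Icc (1 / 2) 1) v w w') (hK : 0 ≤ K)
    (hp : 0 ≤ p) {r l : ℝ} (hr : r ∈ Icc (1 / 2 : ℝ) 1)
    (hl : v 1 ^ (p + 1) ≤ l * v r ^ (p + 1)) :
    exp (-K) * √(2 * (1 - l) / (p + 1)) * v r ^ ((p + 1) / 2) ≤ w r := by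
  have hvr := h.pos r hr
  have hq0 : 0 ≤ weighted K w r :=
    (h.pos_w r hr).le.trans (le_weighted hK hr.2 (h.pos_w r hr).le)
  have hsq : 2 * (1 - l) / (p + 1) * v r ^ (p + 1) ≤ weighted K w r ^ 2 := by
    have := h.energy hK hp hr
    rw [div_mul_eq_mul_div, div_le_iff₀ (by positivity)]
    nlinarith
  have hrpow : v r ^ ((p + 1) / 2) = √(v r ^ (p + 1)) := by
    rw [sqrt_eq_rpow, ← rpow_mul hvr.le]; ring_nf
  calc exp (-K) * √(2 * (1 - l) / (p + 1)) * v r ^ ((p + 1) / 2)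
      = exp (-K) * √(2 * (1 - l) / (p + 1) * v r ^ (p + 1)) := by
        rw [hrpow, mul_assoc, ← sqrt_mul' _ (rpow_nonneg hvr.le _)]
    _ ≤ exp (-K) * weighted K w r := by
        gcongr; exact sqrt_le_iff.2 ⟨hq0, hsq⟩
    _ ≤ w r := exp_neg_mul_weighted_le hK hr.1 (h.pos_w r hr).le

end BlowupIneqOn

theorem exists_forall_blowupIneqOn_Icc_lt {K p : ℝ} (hK : 0 ≤ K) (hp : 1 < p) :
    ∃ A, ∀ v w w' : ℝ → ℝ, BlowupIneqOn K p (Icc (1 / 2) 1) v w w' → v 1 < A := by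
  set θ := 1 + exp (-K) / 64 with hθ_def
  set m := (p - 1) / 2 with hm_def
  set c := exp (-K) * √(2 * (1 - (θ ^ (p + 1))⁻¹) / (p + 1))
  have hθ : 1 < θ := by have := exp_pos (-K); linarith
  have hm : 0 < m := by linarith
  have hc : 0 < c := by
    have : (θ ^ (p + 1))⁻¹ < 1 := inv_lt_one_of_one_lt₀ (one_lt_rpow hθ (by linarith))
    have : 0 < 2 * (1 - (θ ^ (p + 1))⁻¹) / (p + 1) := by apply div_pos <;> linarith
    positivity
  refine ⟨max 1 ((m * c / 4)⁻¹ ^ m⁻¹), fun v w w' h => ?_⟩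
  by_contra! hA
  have hv1 : 1 ≤ v 1 := (le_max_left _ _).trans hA
  have h1 : (1 : ℝ) ∈ Icc (1 / 2 : ℝ) 1 := ⟨by norm_num, le_rfl⟩
  have hanti := h.antitoneOn (convex_Icc _ _)
  have hθv : θ * v 1 ≤ v (3 / 4) :=
    calc θ * v 1 = v 1 + exp (-K) * ((1 - 7 / 8) * (7 / 8 - 3 / 4)) * v 1 := by ring
      _ ≤ v 1 + exp (-K) * ((1 - 7 / 8) * (7 / 8 - 3 / 4)) * v 1 ^ p := by
        gcongr; simpa using rpow_le_rpow_of_exponent_le hv1 hp.le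
      _ ≤ v (3 / 4) := h.add_rpow_le hK (by linarith) (by norm_num) (by norm_num) (by norm_num)
  have hsep := mul_sub_le_rpow_neg_sub_rpow_neg (a := 1 / 2) (b := 3 / 4) (by norm_num) hm.le
    (fun t ht => h.pos t ⟨ht.1, by linarith [ht.2]⟩)
    (fun t ht => h.hasDerivAt t ⟨ht.1, by linarith [ht.2]⟩)
    (w := w) (c := c) fun t ht => by
      have ht' : t ∈ Icc (1 / 2 : ℝ) 1 := ⟨ht.1, by linarith [ht.2]⟩
      have hvt : θ * v 1 ≤ v t := hθv.trans (hanti ht' ⟨by norm_num, by norm_num⟩ ht.2)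
      have hl : v 1 ^ (p + 1) ≤ (θ ^ (p + 1))⁻¹ * v t ^ (p + 1) := by
        rw [inv_mul_eq_div, ← div_rpow (h.pos t ht').le (by positivity)]
        refine rpow_le_rpow (by linarith) ?_ (by linarith)
        rw [le_div_iff₀ (by positivity)]
        linarith
      convert h.rpow_le_w hK (by linarith) ht' hl using 3
      ring
  have hv34 : v (3 / 4) ^ (-m) ≤ v 1 ^ (-m) := rpow_le_rpow_of_nonpos (by linarith)
    (hanti ⟨by norm_num, by norm_num⟩ h1 (by norm_num)) (by linarith)
  have hv1m : v 1 ^ (-m) ≤ m * c / 4 :=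
    rpow_neg_le_of_inv_rpow_inv_le (by positivity) hm ((le_max_right _ _).trans hA)
  have := rpow_pos_of_pos (h.pos (1 / 2) ⟨le_rfl, by norm_num⟩) (-m)
  linarith

theorem not_blowupIneqOn_Ioo {K p ρ : ℝ} {v w w' : ℝ → ℝ} (hK : 0 ≤ K) (hp : 1 < p)
    (hρ : 0 < ρ) : ¬ BlowupIneqOn K p (Ioo 0 ρ) v w w' := by
  intro h
  obtain ⟨A, hA⟩ := exists_forall_blowupIneqOn_Icc_lt hK hp
  have hunit : ∀ R ∈ Ioo 0 ρ, BlowupIneqOn K p (Icc (1 / 2) 1) (fun x => v (R * x))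
      (fun x => R * w (R * x)) (fun x => R ^ 2 * w' (R * x)) := fun R hR =>
    (h.rescale hR.1).mono fun x hx =>
      ⟨by nlinarith [hR.1, hx.1], by nlinarith [hR.1, hR.2, hx.2]⟩
  have hbound : ∀ R ∈ Ioo 0 ρ, v R < A := fun R hR => by
    simpa using hA _ _ _ (hunit R hR)
  have hstep : ∀ R ∈ Ioo 0 ρ, v R + exp (-K) / 16 * v R ^ p ≤ v (R / 2) := fun R hR => by
    have := (hunit R hR).add_rpow_le hK (by linarith) (a := 1 / 2) (b := 3 / 4) le_rfl
      (by norm_num) (by norm_num)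
    norm_num at this
    rwa [mul_one_div, ← div_eq_mul_one_div] at this
  have hanti := h.antitoneOn (convex_Ioo 0 ρ)
  have hdyadic : ∀ n : ℕ, ρ / 2 / 2 ^ n ∈ Ioo 0 ρ ∧ ρ / 2 / 2 ^ n ≤ ρ / 2 := fun n =>
    have := div_le_self (half_pos hρ).le (one_le_pow₀ (by norm_num : (1 : ℝ) ≤ 2) (n := n))
    ⟨⟨by positivity, by linarith⟩, this⟩
  set δ := exp (-K) / 16 * v (ρ / 2) ^ p with hδ
  have hmid := (hdyadic 0).1
  rw [pow_zero, div_one] at hmid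
  have hδ0 : 0 < δ := by have := rpow_pos_of_pos (h.pos _ hmid) p; positivity
  have hgrow : ∀ n : ℕ, v (ρ / 2) + n * δ ≤ v (ρ / 2 / 2 ^ n) := by
    intro n
    induction n with
    | zero => simp
    | succ n ih =>
      have hle : v (ρ / 2) ^ p ≤ v (ρ / 2 / 2 ^ n) ^ p :=
        rpow_le_rpow (h.pos _ hmid).le (hanti (hdyadic n).1 hmid (hdyadic n).2) (by linarith)
      have := mul_le_mul_of_nonneg_left hle (by positivity : 0 ≤ exp (-K) / 16)
      have := hstep _ (hdyadic n).1
      rw [pow_succ, ← div_div]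
      push_cast
      linarith
  obtain ⟨n, hn⟩ := exists_nat_ge ((A - v (ρ / 2)) / δ)
  rw [div_le_iff₀ hδ0] at hn
  linarith [hbound _ (hdyadic n).1, hgrow n]

def eta (β ε t : ℝ) : ℝ := t ^ β * (1 + t ^ ε)

theorem hasDerivAt_eta {β ε r : ℝ} (hr : 0 < r) :
    HasDerivAt (eta β ε) (eta β ε r * (β + ε * (r ^ ε / (1 + r ^ ε))) / r) r := by
  have hβ := hasDerivAt_rpow_const (p := β) (Or.inl hr.ne')
  have hε := (hasDerivAt_rpow_const (p := ε) (Or.inl hr.ne')).const_add 1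
  refine (hβ.mul hε).congr_deriv ?_
  have : 0 < 1 + r ^ ε := by positivity
  rw [eta, rpow_sub_one hr.ne', rpow_sub_one hr.ne']
  field_simp

theorem abs_drift_le {β ε H r : ℝ} (hr : 0 < r) (hr1 : r ≤ 1) :
    |2 * deriv (eta β ε) r / eta β ε r - H| ≤ (2 * |β| + 2 * |ε| + |H|) / r := by
  set x := r ^ ε / (1 + r ^ ε)
  have hx0 : 0 ≤ x := by positivity
  have hx1 : x ≤ 1 := div_le_one_of_le₀ (by linarith) (by positivity)
  have heta : eta β ε r ≠ 0 := by unfold eta; positivity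
  rw [(hasDerivAt_eta hr).deriv, le_div_iff₀ hr, ← abs_of_pos hr, ← abs_mul, abs_of_pos hr]
  rw [show (2 * (eta β ε r * (β + ε * x) / r) / eta β ε r - H) * r
      = 2 * β + 2 * ε * x - H * r by field_simp]
  calc |2 * β + 2 * ε * x - H * r| ≤ |2 * β| + |2 * ε * x| + |H * r| :=
        (abs_sub _ _).trans (by gcongr; exact abs_add_le _ _)
    _ = 2 * |β| + 2 * |ε| * x + |H| * r := by
        simp only [abs_mul, abs_two, abs_of_nonneg hx0, abs_of_pos hr]
    _ ≤ 2 * |β| + 2 * |ε| + |H| := by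
        have := mul_le_of_le_one_right (by positivity : 0 ≤ 2 * |ε|) hx1
        have := mul_le_of_le_one_right (abs_nonneg H) hr1
        linarith

theorem one_div_sq_le_eta_rpow_div {β ε p s r : ℝ} (hr : 0 < r) (hr1 : r ≤ 1) (hp : 1 ≤ p)
    (hs : β * (p - 1) + 2 ≤ s) : 1 / r ^ 2 ≤ eta β ε r ^ (p - 1) / r ^ s := by
  calc 1 / r ^ 2 = r ^ (-2 : ℝ) := by rw [rpow_neg hr.le, one_div]; norm_cast
    _ ≤ r ^ (β * (p - 1) - s) := rpow_le_rpow_of_exponent_ge hr hr1 (by linarith)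
    _ = (r ^ β) ^ (p - 1) / r ^ s := by rw [rpow_sub hr, rpow_mul hr.le]
    _ ≤ eta β ε r ^ (p - 1) / r ^ s := by
        unfold eta
        gcongr
        exact le_mul_of_one_le_right (by positivity) (by linarith [rpow_pos_of_pos hr ε])

theorem blowupIneqOn_of_ode {β ε H p s ρ : ℝ} {v : ℝ → ℝ} (hp : 1 ≤ p)
    (hs : β * (p - 1) + 2 ≤ s) (hρ : ρ ≤ 1) (hv : ContDiffOn ℝ 2 v (Ioo 0 ρ))
    (hpos : ∀ r ∈ Ioo 0 ρ, 0 < v r) (hneg : ∀ r ∈ Ioo 0 ρ, deriv v r < 0)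
    (hode : ∀ r ∈ Ioo 0 ρ, -deriv (deriv v) r - (2 * deriv (eta β ε) r / eta β ε r - H) *
      deriv v r + eta β ε r ^ (p - 1) / r ^ s * v r ^ p = 0) :
    BlowupIneqOn (2 * |β| + 2 * |ε| + |H|) p (Ioo 0 ρ) v (fun r => -deriv v r)
      (fun r => -deriv (deriv v) r) where
  pos := hpos
  pos_w r hr := neg_pos.2 (hneg r hr)
  hasDerivAt r hr := by
    rw [neg_neg]
    exact ((hv.differentiableOn (by norm_num)).differentiableAt
      (isOpen_Ioo.mem_nhds hr)).hasDerivAt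
  hasDerivAt_w r hr :=
    ((((hv.deriv_of_isOpen isOpen_Ioo (m := 1) (by norm_num)).differentiableOn one_ne_zero)
      |>.differentiableAt (isOpen_Ioo.mem_nhds hr)).hasDerivAt).neg
  deriv_w_le r hr := by
    have hr1 : r ≤ 1 := hr.2.le.trans hρ
    have hw : 0 ≤ -deriv v r := (neg_pos.2 (hneg r hr)).le
    have hdrift : (2 * deriv (eta β ε) r / eta β ε r - H) * deriv v r
        ≤ (2 * |β| + 2 * |ε| + |H|) / r * -deriv v r :=
      calc _ = -(2 * deriv (eta β ε) r / eta β ε r - H) * -deriv v r := by ring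
        _ ≤ (2 * |β| + 2 * |ε| + |H|) / r * -deriv v r :=
          mul_le_mul_of_nonneg_right ((neg_le_abs _).trans (abs_drift_le hr.1 hr1)) hw
    have hpot : v r ^ p / r ^ 2 ≤ eta β ε r ^ (p - 1) / r ^ s * v r ^ p := by
      rw [div_eq_mul_one_div, mul_comm]
      exact mul_le_mul_of_nonneg_right (one_div_sq_le_eta_rpow_div hr.1 hr1 hp hs)
        (rpow_pos_of_pos (hpos r hr) p).le
    linarith [hode r hr]

theorem stmt14_general (μ p s ε Hbar : ℝ) (hp : 1 < p)
    (hs : (1 / 2 - Real.sqrt (1 / 4 - μ)) * (p - 1) + 2 ≤ s) :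
    ∃ ρbar, 0 < ρbar ∧ ∀ ρ, 0 < ρ → ρ < ρbar →
      ¬ ∃ v : ℝ → ℝ, ContDiffOn ℝ 2 v (Set.Ioc 0 ρ) ∧
          (∀ r ∈ Set.Ioo 0 ρ, 0 < v r) ∧ (∀ r ∈ Set.Ioo 0 ρ, deriv v r < 0) ∧
          v ρ = 0 ∧ deriv v ρ < 0 ∧
          ∀ r ∈ Set.Ioo 0 ρ,
            -(deriv (deriv v) r) -
                (2 * deriv (fun t : ℝ =>
                    t ^ (1 / 2 - Real.sqrt (1 / 4 - μ)) * (1 + t ^ ε)) r /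
                  (r ^ (1 / 2 - Real.sqrt (1 / 4 - μ)) * (1 + r ^ ε)) - Hbar) *
                deriv v r
              + ((r ^ (1 / 2 - Real.sqrt (1 / 4 - μ)) * (1 + r ^ ε)) ^ (p - 1) / r ^ s) *
                v r ^ p = 0 := by
  refine ⟨1, one_pos, fun ρ hρ hρ1 ⟨v, hv, hpos, hneg, _, _, hode⟩ => ?_⟩
  exact not_blowupIneqOn_Ioo (by positivity) hp hρ
    (blowupIneqOn_of_ode hp.le hs hρ1.le (hv.mono Ioo_subset_Ioc_self) hpos hneg hode)

/-- (ODE Lemma, case `μ < 1/4`.) Let `μ < 1/4`, `p > 1`,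
`s ≥ β₋(p-1)+2`, `ε ∈ (0, min{1, √(1-4μ)})`, `H̄ ∈ ℝ` and `η(r) = r^{β₋}(1+r^ε)`.
Then there is `ρ̄ > 0` such that for every `ρ ∈ (0, ρ̄)` there is no positive decreasing
`C²` solution `v` on `(0, ρ]` with `v(ρ) = 0`, `v'(ρ) < 0` of
`-v'' - (2η'/η - H̄)v' + (η^{p-1}/r^s)v^p = 0` on `(0, ρ)`. -/
theorem stmt14 (μ p s ε Hbar : ℝ) (hμ : μ < 1 / 4) (hp : 1 < p)
    (hs : (1 / 2 - Real.sqrt (1 / 4 - μ)) * (p - 1) + 2 ≤ s)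
    (hε0 : 0 < ε) (hε1 : ε < min 1 (Real.sqrt (1 - 4 * μ))) :
    ∃ ρbar, 0 < ρbar ∧ ∀ ρ, 0 < ρ → ρ < ρbar →
      ¬ ∃ v : ℝ → ℝ, ContDiffOn ℝ 2 v (Set.Ioc 0 ρ) ∧
          (∀ r ∈ Set.Ioo 0 ρ, 0 < v r) ∧ (∀ r ∈ Set.Ioo 0 ρ, deriv v r < 0) ∧
          v ρ = 0 ∧ deriv v ρ < 0 ∧
          ∀ r ∈ Set.Ioo 0 ρ,
            -(deriv (deriv v) r) -
                (2 * deriv (fun t : ℝ =>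
                    t ^ (1 / 2 - Real.sqrt (1 / 4 - μ)) * (1 + t ^ ε)) r /
                  (r ^ (1 / 2 - Real.sqrt (1 / 4 - μ)) * (1 + r ^ ε)) - Hbar) *
                deriv v r
              + ((r ^ (1 / 2 - Real.sqrt (1 / 4 - μ)) * (1 + r ^ ε)) ^ (p - 1) / r ^ s) *
                v r ^ p = 0 :=
  stmt14_general μ p s ε Hbar hp hs
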